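/- Let d ≥ 1, M ⊆ ℤ^d and v ∈ ℤ^d. Then for every n ≥ 1, R_{Bd(M,v)}(n) ≤ R_M(n + ‖v‖). -/

import Mathlib

open Classical

noncomputable section

/-- Sup norm of an integer vector. -/
def supNorm {ι : Type} [Fintype ι] (x : ι → ℤ) : ℕ :=
  Finset.univ.sup fun i => (x i).natAbs

/-- The block of size `n` of `M` at `x`. -/
def blockOf {ι : Type} [Fintype ι] (M : Set (ι → ℤ)) (x : ι → ℤ) (n : ℕ) :
    (ι → Fin n) → Prop :=
  fun w => (fun i => x i + (w i : ℤ)) ∈ M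

/-- A block is recurrent if it occurs at points of arbitrarily large norm. -/
def IsRecurrentBlock {ι : Type} [Fintype ι] (M : Set (ι → ℤ)) (n : ℕ)
    (B : (ι → Fin n) → Prop) : Prop :=
  ∀ L : ℕ, ∃ x : ι → ℤ, L ≤ supNorm x ∧ blockOf M x n = B

/-- `R_M(n)`: number of distinct recurrent blocks of size `n`. -/
def recBlockCount {ι : Type} [Fintype ι] (M : Set (ι → ℤ)) (n : ℕ) : ℕ :=
  Set.ncard {B : (ι → Fin n) → Prop | IsRecurrentBlock M n B}

/-- `p_M(n)`: number of distinct blocks of size `n`. -/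
def blockCount {ι : Type} [Fintype ι] (M : Set (ι → ℤ)) (n : ℕ) : ℕ :=
  Set.ncard {B : (ι → Fin n) → Prop | ∃ x, blockOf M x n = B}

/-- Linear subset of `ℤ^ι`. -/
def IsLinearSetZ {ι : Type} [Fintype ι] (S : Set (ι → ℤ)) : Prop :=
  ∃ (x : ι → ℤ) (V : Finset (ι → ℤ)),
    S = {y | ∃ c : (ι → ℤ) → ℕ, y = x + ∑ v ∈ V, (c v : ℤ) • v}

/-- Semilinear = finite union of linear sets. -/
def IsSemilinearSetZ {ι : Type} [Fintype ι] (S : Set (ι → ℤ)) : Prop :=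
  ∃ F : Finset (Set (ι → ℤ)), (∀ T ∈ F, IsLinearSetZ T) ∧ S = ⋃ T ∈ F, T

/-- Section `M_{i,c}` of a subset of `ℤ^(d+1)`. -/
def sectionSet {d : ℕ} (M : Set (Fin (d + 1) → ℤ)) (i : Fin (d + 1)) (c : ℤ) :
    Set (Fin d → ℤ) :=
  {y | i.insertNth c y ∈ M}

/-- Open ball (for the sup norm) of radius `K` centered at `x`. -/
def ball {ι : Type} [Fintype ι] (x : ι → ℤ) (K : ℕ) : Set (ι → ℤ) :=
  {y | supNorm (x - y) < K}

/-- `M` is `v`-periodic inside `X`. -/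
def vPeriodicInside {ι : Type} [Fintype ι] (M : Set (ι → ℤ)) (v : ι → ℤ)
    (X : Set (ι → ℤ)) : Prop :=
  ∀ m : ι → ℤ, m ∈ X → m + v ∈ X → (m ∈ M ↔ m + v ∈ M)

/-- Border of `A` in direction `v`. -/
def border {ι : Type} (A : Set (ι → ℤ)) (v : ι → ℤ) : Set (ι → ℤ) :=
  {x | x ∈ A ∧ x + v ∉ A}

/-- `(d-k)`-dimensional section of `M ⊆ ℤ^d` obtained by fixing the coordinates
in the range of `g` to the corresponding constants `c`. -/
def multiSection {d k : ℕ} (M : Set (Fin d → ℤ)) (g : Fin k → Fin d)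
    (c : Fin k → ℤ) : Set ({j : Fin d // ∀ m, g m ≠ j} → ℤ) :=
  {y | (fun j : Fin d =>
    if h : ∃ m, g m = j then c (Classical.choose h)
    else y ⟨j, fun m hm => h ⟨m, hm⟩⟩) ∈ M}

/-- Repetitivity of a subset of `ℤ^ι`. -/
def Repetitive {ι : Type} [Fintype ι] (M : Set (ι → ℤ)) : Prop :=
  ∀ n : ℕ, 1 ≤ n → ∃ R : ℕ, ∀ x y : ι → ℤ, ∃ z : ι → ℤ,
    supNorm (z - y) ≤ R ∧ blockOf M z n = blockOf M x n

/-- Ideal crystal: `d` linearly independent translation periods. -/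
def IsIdealCrystal {d : ℕ} (M : Set (Fin d → ℤ)) : Prop :=
  ∃ p : Fin d → (Fin d → ℤ), LinearIndependent ℤ p ∧
    ∀ i, (fun x => x + p i) '' M = M


/-!
A block of `Bd(M, v)` of size `n` at `x` is read off, by a fixed local rule, from the block of `M`
of size `n + ‖v‖` at a fixed translate of `x`: the enlarged window sees both `x + w` and
`x + w + v`. Recurrent blocks are those occurring at infinitely many positions, so by pigeonhole
every recurrent block of `Bd(M, v)` is the image under this rule of a recurrent block of `M`.
-/

section

variable {ι : Type} [Fintype ι]

lemma natAbs_le_supNorm (x : ι → ℤ) (i : ι) : (x i).natAbs ≤ supNorm x :=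
  Finset.le_sup (f := fun j => (x j).natAbs) (Finset.mem_univ i)

lemma finite_setOf_supNorm_lt (L : ℕ) : {x : ι → ℤ | supNorm x < L}.Finite := by
  refine (Set.finite_Icc (-(L : ι → ℤ)) L).subset fun x hx => ?_
  have hx : ∀ i, (x i).natAbs < L := fun i => (natAbs_le_supNorm x i).trans_lt hx
  exact ⟨fun i => by have := hx i; simp only [Pi.neg_apply, Pi.natCast_apply]; omega,
    fun i => by have := hx i; simp only [Pi.natCast_apply]; omega⟩

lemma isRecurrentBlock_iff_infinite {M : Set (ι → ℤ)} {n : ℕ} {B : (ι → Fin n) → Prop} :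
    IsRecurrentBlock M n B ↔ {x | blockOf M x n = B}.Infinite := by
  constructor
  · intro hB hfin
    obtain ⟨L, hL⟩ := (hfin.image supNorm).bddAbove
    obtain ⟨x, hLx, hx⟩ := hB (L + 1)
    have : supNorm x ≤ L := hL ⟨x, hx, rfl⟩
    omega
  · intro hB L
    obtain ⟨x, hx, hLx⟩ := hB.exists_notMem_finite (finite_setOf_supNorm_lt L)
    exact ⟨x, not_lt.mp hLx, hx⟩

theorem recBlockCount_le_of_blockOf_eq {M N : Set (ι → ℤ)} {m n : ℕ} (s : ι → ℤ)
    (φ : ((ι → Fin m) → Prop) → (ι → Fin n) → Prop)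
    (h : ∀ x, blockOf N x n = φ (blockOf M (x - s) m)) :
    recBlockCount N n ≤ recBlockCount M m := by
  have hsub : {B | IsRecurrentBlock N n B} ⊆ φ '' {C | IsRecurrentBlock M m C} := by
    intro B hB
    rw [Set.mem_ofPred_eq, isRecurrentBlock_iff_infinite] at hB
    by_contra hB'
    refine hB (((Set.toFinite (φ ⁻¹' {B})).biUnion
      (t := fun C => (· - s) ⁻¹' {y | blockOf M y m = C}) fun C hC => ?_).subset fun x hx => ?_)
    · have hC : ¬ IsRecurrentBlock M m C := fun hrec => hB' ⟨C, hrec, hC⟩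
      rw [isRecurrentBlock_iff_infinite, Set.not_infinite] at hC
      exact hC.preimage (f := (· - s)) (sub_left_injective.injOn)
    · exact Set.mem_biUnion (x := blockOf M (x - s) m) ((h x).symm.trans hx) rfl
  calc recBlockCount N n ≤ (φ '' {C | IsRecurrentBlock M m C}).ncard :=
        Set.ncard_le_ncard hsub (Set.toFinite _)
    _ ≤ recBlockCount M m := Set.ncard_image_le (Set.toFinite _)

/-- The block of `M` of size `n + ‖v‖` at `x - (-v).toNat` has `x + w` at index `w + (-v).toNat`
and `x + w + v` at index `w + v.toNat`. -/
def borderRule (v : ι → ℤ) (n : ℕ) (C : (ι → Fin (n + supNorm v)) → Prop) :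
    (ι → Fin n) → Prop := fun w =>
  C (fun i => ⟨w i + (-v i).toNat, by have := natAbs_le_supNorm v i; have := (w i).2; omega⟩) ∧
    ¬ C (fun i => ⟨w i + (v i).toNat, by have := natAbs_le_supNorm v i; have := (w i).2; omega⟩)

lemma blockOf_border (M : Set (ι → ℤ)) (v : ι → ℤ) (n : ℕ) (x : ι → ℤ) :
    blockOf (border M v) x n =
      borderRule v n (blockOf M (x - fun i => ((-v i).toNat : ℤ)) (n + supNorm v)) := by
  funext w
  have hneg := fun i => Int.toNat_sub_toNat_neg (v i)
  have hx : (fun i => (x - fun i => ((-v i).toNat : ℤ)) i + ((w i + (-v i).toNat : ℕ) : ℤ)) =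
      fun i => x i + (w i : ℤ) := by
    funext i; have := hneg i; simp only [Pi.sub_apply]; push_cast; omega
  have hxv : (fun i => (x - fun i => ((-v i).toNat : ℤ)) i + ((w i + (v i).toNat : ℕ) : ℤ)) =
      (fun i => x i + (w i : ℤ)) + v := by
    funext i; have := hneg i; simp only [Pi.sub_apply, Pi.add_apply]; push_cast; omega
  simp only [blockOf, border, borderRule, Set.mem_ofPred_eq, hx, hxv]

end

theorem border_recBlockCount_le_general (d : ℕ) (M : Set (Fin d → ℤ))
    (v : Fin d → ℤ) :
    ∀ n : ℕ, 1 ≤ n →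
      recBlockCount (border M v) n ≤ recBlockCount M (n + supNorm v) := fun n _ =>
  recBlockCount_le_of_blockOf_eq _ (borderRule v n) (blockOf_border M v n)

/-- Lemma: `R_{Bd(M,v)}(n) ≤ R_M(n + ‖v‖)` for all `n ≥ 1`. -/
theorem border_recBlockCount_le (d : ℕ) (hd : 1 ≤ d) (M : Set (Fin d → ℤ))
    (v : Fin d → ℤ) :
    ∀ n : ℕ, 1 ≤ n →
      recBlockCount (border M v) n ≤ recBlockCount M (n + supNorm v) :=
  border_recBlockCount_le_general d M v
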